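/- The tensor product of polynomial trees, defined coinductively by tensoring root polynomials via the Dirichlet product and setting (𝐩 ⊗ 𝐪).rest((i,j),(d,e)) = 𝐩.rest(i,d) ⊗ 𝐪.rest(j,e), extends to a functor on the category of polynomial trees: given morphisms φ : 𝐩 → 𝐪 and φ' : 𝐩' → 𝐪', there is a morphism φ ⊗ φ' : 𝐩 ⊗ 𝐩' → 𝐪 ⊗ 𝐪', and this assignment preserves identities and composition. -/
import Mathlib


/-- The universe polynomial composed with itself: positions are codes `(I, D)` for
polynomials, directions are position-direction pairs. -/
abbrev UU : PFunctor.{1} :=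
  ⟨Σ I : Type, I → Type, fun a => ULift.{1} (Σ i : a.1, a.2 i)⟩

/-- Polynomial trees: elements of the terminal `(u ◁ u)`-coalgebra. -/
abbrev PolyTree : Type 1 := UU.M

/-- The position set of the root polynomial of a polynomial tree. -/
def PolyTree.pos (p : PolyTree) : Type := p.dest.1.1

/-- The direction set of the root polynomial at position `i`. -/
def PolyTree.dir (p : PolyTree) (i : p.pos) : Type := p.dest.1.2 i

/-- The child tree at a position-direction pair. -/
def PolyTree.rest (p : PolyTree) {i : p.pos} (d : p.dir i) : PolyTree :=
  p.dest.2 ⟨⟨i, d⟩⟩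

/-- The hom tower: `H 0 = 1`, `H (n+1) p q = Π i Σ j Π e Σ d, H n (children)`. -/
def H : ℕ → PolyTree → PolyTree → Type
  | 0, _, _ => PUnit
  | n+1, p, q =>
      ∀ i : p.pos, Σ j : q.pos, ∀ e : q.dir j, Σ d : p.dir i, H n (p.rest d) (q.rest e)

/-- Projection of the hom tower. -/
def projH : ∀ (n : ℕ) (p q : PolyTree), H (n + 1) p q → H n p q
  | 0, _, _, _ => PUnit.unit
  | n+1, _, _, φ => fun i =>
      ⟨(φ i).1, fun e => ⟨((φ i).2 e).1, projH n _ _ ((φ i).2 e).2⟩⟩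

/-- The morphism set of `PolyTr`: the limit of the hom tower. -/
def PTHom (p q : PolyTree) : Type :=
  { f : ∀ n, H n p q // ∀ n, projH n p q (f (n + 1)) = f n }

/-- Levelwise identity morphism. -/
def idH : ∀ (n : ℕ) (p : PolyTree), H n p p
  | 0, _ => PUnit.unit
  | n+1, p => fun i => ⟨i, fun e => ⟨e, idH n (p.rest e)⟩⟩

/-- Levelwise composition of morphisms. -/
def compH : ∀ (n : ℕ) (p q r : PolyTree), H n p q → H n q r → H n p r
  | 0, _, _, _, _, _ => PUnit.unit
  | n+1, _, _, _, φ, ψ => fun i =>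
      ⟨(ψ (φ i).1).1, fun f =>
        ⟨((φ i).2 ((ψ (φ i).1).2 f).1).1,
          compH n _ _ _ ((φ i).2 ((ψ (φ i).1).2 f).1).2 ((ψ (φ i).1).2 f).2⟩⟩

/-- Tensor product of polynomial trees: Dirichlet product of root polynomials,
with `(p ⊗ q).rest ((i,j),(d,e)) = p.rest (i,d) ⊗ q.rest (j,e)`. -/
def tensTree (p q : PolyTree) : PolyTree :=
  PFunctor.M.corec (fun x : PolyTree × PolyTree =>
    ⟨⟨x.1.pos × x.2.pos, fun ij => x.1.dir ij.1 × x.2.dir ij.2⟩,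
      fun de => (x.1.rest de.down.2.1, x.2.rest de.down.2.2)⟩) (p, q)

/-- Levelwise tensor of morphisms. -/
def tensH : ∀ (n : ℕ) (p q p' q' : PolyTree),
    H n p q → H n p' q' → H n (tensTree p p') (tensTree q q')
  | 0, _, _, _, _, _, _ => PUnit.unit
  | n+1, p, q, p', q', φ, φ' => fun i =>
      ⟨show (tensTree q q').pos from (((φ i.1).1, (φ' i.2).1) : q.pos × q'.pos),
        fun e =>
          ⟨show (tensTree p p').dir i from
              ((((φ i.1).2 e.1).1, ((φ' i.2).2 e.2).1) : p.dir i.1 × p'.dir i.2),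
            tensH n _ _ _ _ (((φ i.1).2 e.1).2) (((φ' i.2).2 e.2).2)⟩⟩

theorem projH_idH : ∀ (n : ℕ) (p : PolyTree), projH n p p (idH (n+1) p) = idH n p
  | 0, _ => rfl
  | n+1, p => by
      funext i
      show (⟨i, fun e => ⟨e, projH n _ _ (idH (n+1) (p.rest e))⟩⟩ :
        Σ j : p.pos, ∀ e : p.dir j, Σ d : p.dir i, H n (p.rest d) (p.rest e)) = _
      exact congrArg (Sigma.mk i) (funext fun e =>
        congrArg (Sigma.mk e) (projH_idH n (p.rest e)))

theorem projH_compH : ∀ (n : ℕ) (p q r : PolyTree) (φ : H (n+1) p q) (ψ : H (n+1) q r),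
    projH n p r (compH (n+1) p q r φ ψ) =
      compH n p q r (projH n p q φ) (projH n q r ψ)
  | 0, _, _, _, _, _ => rfl
  | n+1, p, q, r, φ, ψ => by
      funext i
      exact congrArg (Sigma.mk _) (funext fun f =>
        congrArg (Sigma.mk _) (projH_compH n _ _ _ _ _))

theorem projH_tensH : ∀ (n : ℕ) (p q p' q' : PolyTree)
    (φ : H (n+1) p q) (φ' : H (n+1) p' q'),
    projH n (tensTree p p') (tensTree q q') (tensH (n+1) p q p' q' φ φ') =
      tensH n p q p' q' (projH n p q φ) (projH n p' q' φ')
  | 0, _, _, _, _, _, _ => rfl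
  | n+1, p, q, p', q', φ, φ' => by
      funext i
      exact congrArg (Sigma.mk _) (funext fun e =>
        congrArg (Sigma.mk _)
          (projH_tensH n (p.rest (((φ i.1).2 e.1).1)) (q.rest e.1)
            (p'.rest (((φ' i.2).2 e.2).1)) (q'.rest e.2)
            (((φ i.1).2 e.1).2) (((φ' i.2).2 e.2).2)))

theorem tensH_idH : ∀ (n : ℕ) (p p' : PolyTree),
    tensH n p p p' p' (idH n p) (idH n p') = idH n (tensTree p p')
  | 0, _, _ => rfl
  | n+1, p, p' => by
      funext i
      exact congrArg (Sigma.mk i) (funext fun e =>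
        congrArg (Sigma.mk e) (tensH_idH n (p.rest e.1) (p'.rest e.2)))

theorem tensH_compH : ∀ (n : ℕ) (p q r p' q' r' : PolyTree)
    (φ : H n p q) (ψ : H n q r) (φ' : H n p' q') (ψ' : H n q' r'),
    tensH n p r p' r' (compH n p q r φ ψ) (compH n p' q' r' φ' ψ') =
      compH n (tensTree p p') (tensTree q q') (tensTree r r')
        (tensH n p q p' q' φ φ') (tensH n q r q' r' ψ ψ')
  | 0, _, _, _, _, _, _, _, _, _, _ => rfl
  | n+1, p, q, r, p', q', r', φ, ψ, φ', ψ' => by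
      funext i
      exact congrArg (Sigma.mk _) (funext fun f =>
        congrArg (Sigma.mk _) (tensH_compH n _ _ _ _ _ _ _ _ _ _))

/-- Identity morphism. -/
def identPT (p : PolyTree) : PTHom p p :=
  ⟨fun n => idH n p, fun n => projH_idH n p⟩

/-- Composition of morphisms. -/
def compPT (p q r : PolyTree) (φ : PTHom p q) (ψ : PTHom q r) : PTHom p r :=
  ⟨fun n => compH n p q r (φ.1 n) (ψ.1 n),
    fun n => by rw [projH_compH, φ.2, ψ.2]⟩

/-- Tensor of morphisms. -/
def tensPT (p q p' q' : PolyTree) (φ : PTHom p q) (φ' : PTHom p' q') :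
    PTHom (tensTree p p') (tensTree q q') :=
  ⟨fun n => tensH n p q p' q' (φ.1 n) (φ'.1 n),
    fun n => by rw [projH_tensH, φ.2, φ'.2]⟩

/-- The tensor product of polynomial trees extends to a functor: relative to the
coinductive category structure (identities `idH`, composition `compH`), there is
an action `φ ⊗ φ' : p ⊗ p' → q ⊗ q'` on morphisms, preserving identities and
composition. -/
theorem tensTree_functorial :
    ∃ (ident : ∀ p : PolyTree, PTHom p p)
      (comp : ∀ p q r : PolyTree, PTHom p q → PTHom q r → PTHom p r),
      (∀ (p : PolyTree) (n : ℕ), (ident p).1 n = idH n p) ∧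
      (∀ (p q r : PolyTree) (φ : PTHom p q) (ψ : PTHom q r) (n : ℕ),
        (comp p q r φ ψ).1 n = compH n p q r (φ.1 n) (ψ.1 n)) ∧
      ∃ tens : ∀ p q p' q' : PolyTree,
          PTHom p q → PTHom p' q' → PTHom (tensTree p p') (tensTree q q'),
        (∀ p p' : PolyTree,
          tens p p p' p' (ident p) (ident p') = ident (tensTree p p')) ∧
        (∀ (p q r p' q' r' : PolyTree) (φ : PTHom p q) (ψ : PTHom q r)
          (φ' : PTHom p' q') (ψ' : PTHom q' r'),
          tens p r p' r' (comp p q r φ ψ) (comp p' q' r' φ' ψ') =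
            comp (tensTree p p') (tensTree q q') (tensTree r r')
              (tens p q p' q' φ φ') (tens q r q' r' ψ ψ')) := by
  refine ⟨identPT, compPT, fun _ _ => rfl, fun _ _ _ _ _ _ => rfl, tensPT, ?_, ?_⟩
  · intro p p'
    exact Subtype.ext (funext fun n => tensH_idH n p p')
  · intro p q r p' q' r' φ ψ φ' ψ'
    exact Subtype.ext (funext fun n =>
      tensH_compH n p q r p' q' r' (φ.1 n) (ψ.1 n) (φ'.1 n) (ψ'.1 n))
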